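/- Under the hypotheses of the previous approximation estimate, if additionally r is uniformly continuous on [0,T] and x is continuous on [-q,T], then for every T > 0, max_{0 ≤ t ≤ T} |x(φ)(t) - z_h(φ)(t)| → 0 as h → 0. -/

import Mathlib

/-!
Let `e = x - z_h` and `K ≥ |a|` on `[0, T]`. Then `e 0 = 0` and
`e' s = -a s * (x (s - r s) - x (γ_h s)) - a s * e (γ_h s)`.
The deviated argument `γ_h s` is a grid point within `h + ω_r(h)` of `s - r s`, so the first
term is at most `K ω_x(h + ω_r(h))`; moreover `γ_h s ≤ s`, and `e (γ_h s) = 0` when `γ_h s ≤ 0`,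
because `z_h` agrees with `φ = x` at the initial grid points. Hence
`|e' s| ≤ K (ω_x(h + ω_r(h)) + max_{[0, s]} |e|)`, and a Gronwall argument for this delayed
inequality gives `|e| ≤ ω_x(h + ω_r(h)) (exp (K T) - 1)` on `[0, T]`, which tends to `0` with `h`.
-/

/-- The piecewise constant deviated argument -/
noncomputable def gammaPCA (h : ℝ) (r : ℝ → ℝ) (t : ℝ) : ℝ :=
  (⌊t / h - (⌊r ((⌊t / h⌋ : ℝ) * h) / h⌋ : ℝ)⌋ : ℝ) * h

open Set Real

theorem exists_le_forall_lt_of_continuousOn {f g : ℝ → ℝ} {a b : ℝ}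
    (hf : ContinuousOn f (Icc a b)) (hg : ContinuousOn g (Icc a b))
    (h : ∃ t ∈ Icc a b, g t ≤ f t) :
    ∃ t ∈ Icc a b, g t ≤ f t ∧ ∀ s ∈ Ico a t, f s < g s := by
  set V := Icc a b ∩ (fun t => f t - g t) ⁻¹' Ici 0
  have hV : IsCompact V :=
    isCompact_Icc.of_isClosed_subset ((hf.sub hg).preimage_isClosed_of_isClosed isClosed_Icc
      isClosed_Ici) inter_subset_left
  obtain ⟨t, ⟨htab, hgf⟩, hleast⟩ :=
    hV.exists_isLeast (h.imp fun t ht => ⟨ht.1, sub_nonneg.2 ht.2⟩)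
  refine ⟨t, htab, sub_nonneg.1 hgf, fun s hs => ?_⟩
  by_contra! hgs
  exact hs.2.not_ge (hleast ⟨⟨hs.1, hs.2.le.trans htab.2⟩, sub_nonneg.2 hgs⟩)

section DelayGronwall

variable {E : Type*} [NormedAddCommGroup E] [NormedSpace ℝ E] {f f' : ℝ → E} {a b K δ : ℝ}

theorem norm_lt_of_delayed_norm_deriv_le
    (hK : 0 ≤ K) (hδ : 0 ≤ δ) (hf : ContinuousOn f (Icc a b))
    (hf' : ∀ s ∈ Ico a b, HasDerivWithinAt f (f' s) (Ici s) s) (hfa : f a = 0)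
    (bound : ∀ s ∈ Ico a b, ∃ σ ∈ Icc a s, ‖f' s‖ ≤ K * (δ + ‖f σ‖))
    {η : ℝ} (hη : 0 < η) :
    ∀ t ∈ Icc a b, ‖f t‖ < (δ + η) * exp (K * (t - a)) - δ := by
  set B : ℝ → ℝ := fun t => (δ + η) * exp (K * (t - a)) - δ
  have hB_mono : Monotone B := fun u v huv => by
    simp only [B]; gcongr
  have hB_cont : Continuous B := by fun_prop
  have hB_deriv : ∀ t, HasDerivAt (fun t => B t - η) (K * (δ + B t)) t := fun t => by
    have hlin : HasDerivAt (fun t => K * (t - a)) K t := by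
      simpa using ((hasDerivAt_id' t).sub_const a).const_mul K
    exact (((hlin.exp.const_mul (δ + η)).sub_const δ).sub_const η).congr_deriv (by ring)
  -- `B' = K (δ + B)` and `‖f a‖ < B a = η`. At the first time `t` where `‖f‖` reaches `B`, the
  -- delayed bound gives `‖f'‖ ≤ B'` on `[a, t)`, so fencing `f` by `B - η` yields `‖f t‖ < B t`.
  by_contra! hcross
  obtain ⟨t, ht, hBt, hbelow⟩ := exists_le_forall_lt_of_continuousOn hf.norm
    hB_cont.continuousOn hcross
  have hfB : ∀ s ∈ Ico a t, ‖f' s‖ ≤ K * (δ + B s) := fun s hs => by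
    obtain ⟨σ, hσ, hσs⟩ := bound s ⟨hs.1, hs.2.trans_le ht.2⟩
    have hσB : ‖f σ‖ ≤ B s := by
      rcases hσ.2.lt_or_eq with hlt | rfl
      · exact (hbelow σ ⟨hσ.1, hlt.trans hs.2⟩).le.trans (hB_mono hσ.2)
      · exact (hbelow σ hs).le
    exact hσs.trans (by gcongr)
  have := image_norm_le_of_norm_deriv_right_le_deriv_boundary
    (hf.mono (Icc_subset_Icc le_rfl ht.2)) (fun s hs => hf' s ⟨hs.1, hs.2.trans_le ht.2⟩)
    (by simp [hfa, B]) hB_deriv hfB (right_mem_Icc.2 ht.1)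
  linarith

theorem norm_le_of_delayed_norm_deriv_le
    (hK : 0 ≤ K) (hδ : 0 ≤ δ) (hf : ContinuousOn f (Icc a b))
    (hf' : ∀ s ∈ Ico a b, HasDerivWithinAt f (f' s) (Ici s) s) (hfa : f a = 0)
    (bound : ∀ s ∈ Ico a b, ∃ σ ∈ Icc a s, ‖f' s‖ ≤ K * (δ + ‖f σ‖)) :
    ∀ t ∈ Icc a b, ‖f t‖ ≤ δ * (exp (K * (t - a)) - 1) := by
  intro t ht
  refine le_of_forall_pos_le_add fun ε hε => ?_
  have hE := exp_pos (K * (t - a))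
  have := norm_lt_of_delayed_norm_deriv_le hK hδ hf hf' hfa bound (div_pos hε hE) t ht
  rw [add_mul, div_mul_cancel₀ _ hE.ne'] at this
  linarith

end DelayGronwall

section GammaPCA

variable {h T : ℝ}

theorem floor_div_mul_mem_Icc (hh : 0 < h) {t : ℝ} (ht : t ∈ Icc 0 T) :
    (⌊t / h⌋ : ℝ) * h ∈ Icc 0 T :=
  ⟨mul_nonneg (Int.cast_nonneg (Int.floor_nonneg.2 (div_nonneg ht.1 hh.le))) hh.le,
    (sub_nonneg.1 (Int.sub_floor_div_mul_nonneg t hh)).trans ht.2⟩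

theorem gammaPCA_eq (h : ℝ) (r : ℝ → ℝ) (t : ℝ) :
    gammaPCA h r t = (⌊t / h⌋ : ℝ) * h - (⌊r ((⌊t / h⌋ : ℝ) * h) / h⌋ : ℝ) * h := by
  rw [gammaPCA, Int.floor_sub_intCast]
  push_cast
  ring

theorem abs_gammaPCA_sub_lt (hh : 0 < h) (r : ℝ → ℝ) (t : ℝ) :
    |gammaPCA h r t - (t - r ((⌊t / h⌋ : ℝ) * h))| < h := by
  have ht₀ := Int.sub_floor_div_mul_nonneg t hh
  have ht₁ := Int.sub_floor_div_mul_lt t hh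
  have hr₀ := Int.sub_floor_div_mul_nonneg (r ((⌊t / h⌋ : ℝ) * h)) hh
  have hr₁ := Int.sub_floor_div_mul_lt (r ((⌊t / h⌋ : ℝ) * h)) hh
  rw [gammaPCA_eq, abs_sub_lt_iff]
  constructor <;> linarith

theorem gammaPCA_le (hh : 0 < h) {r : ℝ → ℝ} {t : ℝ} (hr : 0 ≤ r ((⌊t / h⌋ : ℝ) * h)) :
    gammaPCA h r t ≤ t := by
  have ht := Int.sub_floor_div_mul_nonneg t hh
  have hr' : (0 : ℝ) ≤ ⌊r ((⌊t / h⌋ : ℝ) * h) / h⌋ * h :=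
    mul_nonneg (Int.cast_nonneg (Int.floor_nonneg.2 (div_nonneg hr hh.le))) hh.le
  rw [gammaPCA_eq]
  linarith

theorem exists_gammaPCA_eq_intCast_mul (hh : 0 < h) {r : ℝ → ℝ} {t : ℝ} {k : ℕ} (ht : 0 ≤ t)
    (hr : r ((⌊t / h⌋ : ℝ) * h) ≤ k * h) :
    ∃ n : ℤ, -(k : ℤ) ≤ n ∧ gammaPCA h r t = n * h := by
  refine ⟨⌊t / h⌋ - ⌊r ((⌊t / h⌋ : ℝ) * h) / h⌋, ?_, by rw [gammaPCA_eq]; push_cast; ring⟩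
  have ht' : 0 ≤ ⌊t / h⌋ := Int.floor_nonneg.2 (div_nonneg ht hh.le)
  have hr' : ⌊r ((⌊t / h⌋ : ℝ) * h) / h⌋ ≤ k := by
    simpa using Int.floor_le_floor ((div_le_iff₀ hh).2 hr)
  omega

theorem exists_forall_abs_gammaPCA_sub_le {r : ℝ → ℝ} (hr : ContinuousOn r (Icc 0 T)) {ρ : ℝ}
    (hρ : 0 < ρ) :
    ∃ h₀ > 0, ∀ h, 0 < h → h ≤ h₀ → ∀ t ∈ Icc 0 T, |gammaPCA h r t - (t - r t)| ≤ ρ := by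
  obtain ⟨δ, hδ, hrδ⟩ := Metric.uniformContinuousOn_iff_le.1
    (isCompact_Icc.uniformContinuousOn_of_continuous hr) (ρ / 2) (half_pos hρ)
  refine ⟨min δ (ρ / 2), lt_min hδ (half_pos hρ), fun h hh hh₀ t ht => ?_⟩
  have hgrid : dist ((⌊t / h⌋ : ℝ) * h) t ≤ δ := by
    rw [Real.dist_eq, abs_sub_comm, abs_of_nonneg (Int.sub_floor_div_mul_nonneg t hh)]
    exact (Int.sub_floor_div_mul_lt t hh).le.trans (hh₀.trans (min_le_left _ _))
  have hr_near := hrδ _ (floor_div_mul_mem_Icc hh ht) t ht hgrid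
  rw [Real.dist_eq] at hr_near
  calc |gammaPCA h r t - (t - r t)|
      = |(gammaPCA h r t - (t - r ((⌊t / h⌋ : ℝ) * h))) + (r t - r ((⌊t / h⌋ : ℝ) * h))| := by
        ring_nf
    _ ≤ h + ρ / 2 := (abs_add_le _ _).trans
        (add_le_add (abs_gammaPCA_sub_lt hh r t).le (by rwa [abs_sub_comm]))
    _ ≤ ρ := by linarith [hh₀.trans (min_le_right δ (ρ / 2))]

theorem gammaPCA_mem_Icc {q : ℝ} {r : ℝ → ℝ} {k : ℕ} {t : ℝ} (hh : 0 < h) (hkh : (k : ℝ) * h = q)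
    (hr : ∀ t ∈ Icc 0 T, r t ∈ Icc 0 q) (ht : t ∈ Icc 0 T) : gammaPCA h r t ∈ Icc (-q) t := by
  have hrt := hr _ (floor_div_mul_mem_Icc hh ht)
  obtain ⟨n, hn, hγ⟩ := exists_gammaPCA_eq_intCast_mul hh ht.1 (hkh ▸ hrt.2)
  have hn' : -(k : ℝ) ≤ n := by exact_mod_cast hn
  refine ⟨?_, gammaPCA_le hh hrt.1⟩
  rw [hγ, ← hkh, ← neg_mul]
  exact mul_le_mul_of_nonneg_right hn' hh.le

theorem exists_gammaPCA_eq_intCast_mul_of_nonpos {q : ℝ} {r : ℝ → ℝ} {k : ℕ} {t : ℝ} (hh : 0 < h)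
    (hkh : (k : ℝ) * h = q) (hr : ∀ t ∈ Icc 0 T, r t ∈ Icc 0 q) (ht : t ∈ Icc 0 T)
    (hγ : gammaPCA h r t ≤ 0) : ∃ n : ℤ, -(k : ℤ) ≤ n ∧ n ≤ 0 ∧ gammaPCA h r t = n * h := by
  obtain ⟨n, hn, hγn⟩ :=
    exists_gammaPCA_eq_intCast_mul hh ht.1 (hkh ▸ (hr _ (floor_div_mul_mem_Icc hh ht)).2)
  rw [hγn] at hγ
  exact ⟨n, hn, by exact_mod_cast nonpos_of_mul_nonpos_left hγ hh, hγn⟩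

end GammaPCA

theorem exists_mem_Icc_abs_mul_sub_le {x z : ℝ → ℝ} {A K δ s u γ : ℝ} (hA : |A| ≤ K)
    (hs : 0 ≤ s) (hγs : γ ≤ s) (hxγ : |x u - x γ| ≤ δ) (hzγ : γ ≤ 0 → z γ = x γ) :
    ∃ σ ∈ Icc 0 s, |A * x u - A * z γ| ≤ K * (δ + |x σ - z σ|) := by
  have hsplit : |A * x u - A * z γ| ≤ K * (δ + |x γ - z γ|) := by
    rw [← mul_sub, abs_mul]
    refine mul_le_mul hA ?_ (abs_nonneg _) ((abs_nonneg A).trans hA)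
    calc |x u - z γ| = |(x u - x γ) + (x γ - z γ)| := by ring_nf
      _ ≤ δ + |x γ - z γ| := (abs_add_le _ _).trans (by gcongr)
  rcases le_or_gt γ 0 with hγ | hγ
  · refine ⟨0, left_mem_Icc.2 hs, hsplit.trans ?_⟩
    rw [hzγ hγ, sub_self, abs_zero]
    gcongr
    · exact (abs_nonneg A).trans hA
    · simp
  · exact ⟨γ, ⟨hγ.le, hγs⟩, hsplit⟩

theorem compact_interval_convergence_general
    (T q : ℝ) (hq : 0 < q)
    (a : ℝ → ℝ) (ha_cont : ContinuousOn a (Set.Icc 0 T))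
    (r : ℝ → ℝ) (hr_cont : ContinuousOn r (Set.Icc 0 T))
    (hr : ∀ t ∈ Set.Icc (0 : ℝ) T, r t ∈ Set.Icc 0 q)
    (φ : ℝ → ℝ)
    (x : ℝ → ℝ)
    (hx_cont : ContinuousOn x (Set.Icc (-q) T))
    (hx_init : ∀ t ∈ Set.Icc (-q) (0 : ℝ), x t = φ t)
    (hx_deriv : ∀ t ∈ Set.Icc (0 : ℝ) T,
      HasDerivWithinAt x (-(a t) * x (t - r t)) (Set.Ici t) t) :
    ∀ ε > (0 : ℝ), ∃ h₀ > (0 : ℝ),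
      ∀ (h : ℝ) (k : ℕ) (z : ℝ → ℝ),
        0 < h → h ≤ h₀ → h ≤ q → (k : ℝ) * h = q →
        ContinuousOn z (Set.Ici 0) →
        (∀ n : ℤ, -(k : ℤ) ≤ n → n ≤ 0 → z ((n : ℝ) * h) = φ ((n : ℝ) * h)) →
        (∀ t ∈ Set.Ico (0 : ℝ) T,
          HasDerivWithinAt z (-(a t) * z (gammaPCA h r t)) (Set.Ici t) t) →
        ∀ t ∈ Set.Icc (0 : ℝ) T, |x t - z t| ≤ ε := by
  intro ε hε
  obtain ⟨K, hK, haK⟩ : ∃ K, 0 ≤ K ∧ ∀ s ∈ Icc 0 T, |a s| ≤ K := by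
    obtain ⟨C, hC⟩ := isCompact_Icc.exists_bound_of_continuousOn ha_cont
    exact ⟨max C 0, le_max_right _ _, fun s hs => (hC s hs).trans (le_max_left _ _)⟩
  set δ := ε / exp (K * T)
  obtain ⟨ρ, hρ, hxρ⟩ := Metric.uniformContinuousOn_iff_le.1
    (isCompact_Icc.uniformContinuousOn_of_continuous hx_cont) δ (by positivity)
  obtain ⟨h₀, hh₀, hγρ⟩ := exists_forall_abs_gammaPCA_sub_le hr_cont hρ
  refine ⟨h₀, hh₀, fun h k z hh hhh₀ _ hkh hz_cont hz_init hz_deriv => ?_⟩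
  have hbound : ∀ s ∈ Ico 0 T, ∃ σ ∈ Icc 0 s,
      ‖-a s * x (s - r s) - -a s * z (gammaPCA h r s)‖ ≤ K * (δ + ‖x σ - z σ‖) := by
    intro s hs
    have hs' := Ico_subset_Icc_self hs
    have hγ := gammaPCA_mem_Icc hh hkh hr hs'
    refine exists_mem_Icc_abs_mul_sub_le ((abs_neg (a s)).trans_le (haK s hs')) hs.1 hγ.2
      (hxρ _ ⟨by linarith [(hr s hs').2, hs.1], by linarith [(hr s hs').1, hs.2]⟩ _
        ⟨hγ.1, hγ.2.trans hs'.2⟩ (by rw [dist_comm]; exact hγρ h hh hhh₀ s hs')) fun hγ0 => ?_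
    obtain ⟨n, hn, hn0, hγn⟩ := exists_gammaPCA_eq_intCast_mul_of_nonpos hh hkh hr hs' hγ0
    rw [hγn, hz_init n hn hn0, ← hγn, hx_init _ ⟨hγ.1, hγ0⟩]
  have herr := norm_le_of_delayed_norm_deriv_le (f := fun t => x t - z t) hK (by positivity)
    ((hx_cont.mono (Icc_subset_Icc (by linarith) le_rfl)).sub (hz_cont.mono fun _ h => h.1))
    (fun s hs => (hx_deriv s (Ico_subset_Icc_self hs)).sub (hz_deriv s hs))
    (by simp [hx_init 0 ⟨by linarith, le_rfl⟩, by simpa using hz_init 0 (by simp) le_rfl]) hbound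
  intro t ht
  calc |x t - z t| ≤ δ * (exp (K * (t - 0)) - 1) := herr t ht
    _ ≤ δ * exp (K * T) := by
        gcongr
        linarith [exp_le_exp.2 (mul_le_mul_of_nonneg_left (by linarith [ht.2] : t - 0 ≤ T) hK)]
    _ = ε := div_mul_cancel₀ _ (exp_pos _).ne'

/-- Uniform convergence of the piecewise-constant-argument approximations on
any compact interval [0,T] as h → 0 (Theorem 3.2, limit form). -/
theorem compact_interval_convergence
    (T q : ℝ) (hT : 0 < T) (hq : 0 < q)
    (a : ℝ → ℝ) (ha_cont : ContinuousOn a (Set.Icc 0 T))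
    (ha_nonneg : ∀ t ∈ Set.Icc (0 : ℝ) T, 0 ≤ a t)
    (r : ℝ → ℝ) (hr_cont : ContinuousOn r (Set.Icc 0 T))
    (hr : ∀ t ∈ Set.Icc (0 : ℝ) T, r t ∈ Set.Icc 0 q)
    (φ : ℝ → ℝ) (hφ : ContinuousOn φ (Set.Icc (-q) 0))
    (x : ℝ → ℝ)
    (hx_cont : ContinuousOn x (Set.Icc (-q) T))
    (hx_init : ∀ t ∈ Set.Icc (-q) (0 : ℝ), x t = φ t)
    (hx_deriv : ∀ t ∈ Set.Icc (0 : ℝ) T,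
      HasDerivWithinAt x (-(a t) * x (t - r t)) (Set.Ici t) t) :
    ∀ ε > (0 : ℝ), ∃ h₀ > (0 : ℝ),
      ∀ (h : ℝ) (k : ℕ) (z : ℝ → ℝ),
        0 < h → h ≤ h₀ → h ≤ q → (k : ℝ) * h = q →
        ContinuousOn z (Set.Ici 0) →
        (∀ n : ℤ, -(k : ℤ) ≤ n → n ≤ 0 → z ((n : ℝ) * h) = φ ((n : ℝ) * h)) →
        (∀ t ∈ Set.Ico (0 : ℝ) T,
          HasDerivWithinAt z (-(a t) * z (gammaPCA h r t)) (Set.Ici t) t) →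
        ∀ t ∈ Set.Icc (0 : ℝ) T, |x t - z t| ≤ ε :=
  compact_interval_convergence_general T q hq a ha_cont r hr_cont hr φ x hx_cont hx_init hx_deriv
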